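/- (Jacobi triple product identity) For complex $z \ne 0$ and $|q| < 1$, $\prod_{n=0}^{\infty}(1+zq^{n+1})(1+z^{-1}q^n)(1-q^{n+1}) = \sum_{n=-\infty}^{\infty} z^n q^{(n^2+n)/2}$. -/

import Mathlib

/-!
Expanding `∏_{j<2N} (1 + t q^j)` by Cauchy's `q`-binomial theorem at `t = z q^{1-N}` gives the
finite identity
`∏_{j<N} (1 + z q^{j+1}) (1 + z⁻¹ q^j) = ∑_{|m| ≤ N} [2N, N+m]_q z^m q^{m(m+1)/2}`.
For `|q| < 1` the Gaussian binomials `[2N, N+m]_q = (q;q)_{2N} / ((q;q)_{N+m} (q;q)_{N-m})` are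
uniformly bounded and tend to `1 / (q;q)_∞`, while `∑ |z^m q^{m(m+1)/2}|` converges, so Tannery's
theorem lets `N → ∞` termwise; multiplying by `(q;q)_∞` gives the identity.
-/

open Finset Filter Topology

section GaussianBinomial

variable {R : Type*}

def gaussBinom [CommSemiring R] (q : R) : ℕ → ℕ → R
  | _, 0 => 1
  | 0, _ + 1 => 0
  | n + 1, k + 1 => q ^ (k + 1) * gaussBinom q n (k + 1) + gaussBinom q n k

section CommSemiring

variable [CommSemiring R] (q : R)

@[simp] theorem gaussBinom_zero_right (n : ℕ) : gaussBinom q n 0 = 1 := by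
  cases n <;> rfl

theorem gaussBinom_succ_succ (n k : ℕ) :
    gaussBinom q (n + 1) (k + 1) = q ^ (k + 1) * gaussBinom q n (k + 1) + gaussBinom q n k :=
  rfl

theorem gaussBinom_eq_zero_of_lt {n k : ℕ} (h : n < k) : gaussBinom q n k = 0 := by
  induction n generalizing k with
  | zero => obtain ⟨k, rfl⟩ := Nat.exists_eq_add_one.2 h; rfl
  | succ n ih =>
    obtain ⟨k, rfl⟩ := Nat.exists_eq_add_one.2 (Nat.zero_lt_of_lt h)
    rw [gaussBinom_succ_succ, ih (by omega), ih (by omega), mul_zero, add_zero]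

@[simp] theorem gaussBinom_self (n : ℕ) : gaussBinom q n n = 1 := by
  induction n with
  | zero => rfl
  | succ n ih => rw [gaussBinom_succ_succ, gaussBinom_eq_zero_of_lt q n.lt_succ_self, ih]; simp

theorem prod_one_add_mul_pow_eq_sum_gaussBinom (t : R) (n : ℕ) :
    ∏ j ∈ range n, (1 + t * q ^ j) =
      ∑ k ∈ range (n + 1), gaussBinom q n k * q ^ k.choose 2 * t ^ k := by
  induction n generalizing t with
  | zero => simp
  | succ n ih =>
    set f : ℕ → R := fun k => gaussBinom q n k * q ^ (k + 1).choose 2 * t ^ k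
    have hextend : ∑ k ∈ range (n + 1), f k = ∑ k ∈ range (n + 2), f k := by
      simp [f, sum_range_succ _ (n + 1), gaussBinom_eq_zero_of_lt q n.lt_succ_self]
    have hshift : ∑ k ∈ range (n + 1), gaussBinom q n k * q ^ k.choose 2 * (t * q) ^ k =
        ∑ k ∈ range (n + 1), f k := sum_congr rfl fun k _ => by
      simp only [f, Nat.choose_succ_succ, Nat.choose_one_right, mul_pow, pow_add]; ring
    calc ∏ j ∈ range (n + 1), (1 + t * q ^ j)
        = (1 + t) * ∏ j ∈ range n, (1 + t * q * q ^ j) := by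
          rw [prod_range_succ', pow_zero, mul_one, mul_comm]
          exact congrArg _ (prod_congr rfl fun j _ => by ring)
      _ = ∑ k ∈ range (n + 2), f k + t * ∑ k ∈ range (n + 1), f k := by
          rw [← hextend, ih, hshift]; ring
      _ = ∑ k ∈ range (n + 1), (f (k + 1) + t * f k) + f 0 := by
          rw [sum_add_distrib, ← mul_sum, sum_range_succ' f (n + 1)]; ring
      _ = ∑ k ∈ range (n + 2), gaussBinom q (n + 1) k * q ^ k.choose 2 * t ^ k := by
          rw [sum_range_succ' _ (n + 1)]
          congr 1
          · refine sum_congr rfl fun k _ => ?_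
            simp only [f, gaussBinom_succ_succ, Nat.choose_succ_succ (k + 1), Nat.choose_one_right,
              pow_add]
            ring
          · simp [f]

end CommSemiring

section CommRing

variable [CommRing R] (q : R)

/-- The `q`-Pochhammer symbol `(q; q)_n`. -/
def qPochhammer (n : ℕ) : R := ∏ j ∈ range n, (1 - q ^ (j + 1))

@[simp] theorem qPochhammer_zero : qPochhammer q 0 = 1 := prod_range_zero _

theorem qPochhammer_succ (n : ℕ) :
    qPochhammer q (n + 1) = qPochhammer q n * (1 - q ^ (n + 1)) :=
  prod_range_succ _ _

theorem gaussBinom_mul_qPochhammer_mul_qPochhammer {n k : ℕ} (h : k ≤ n) :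
    gaussBinom q n k * qPochhammer q k * qPochhammer q (n - k) = qPochhammer q n := by
  induction n generalizing k with
  | zero => obtain rfl := Nat.le_zero.1 h; simp
  | succ n ih =>
    rcases k with _ | k
    · simp
    obtain hk | rfl := (Nat.le_of_succ_le_succ h).lt_or_eq
    · obtain ⟨m, rfl⟩ := Nat.exists_eq_add_of_lt hk
      have h₁ := ih (k := k + 1) (by omega)
      have h₂ := ih (k := k) (by omega)
      rw [show k + m + 1 - (k + 1) = m by omega, qPochhammer_succ q k] at h₁
      rw [show k + m + 1 - k = m + 1 by omega, qPochhammer_succ q m] at h₂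
      rw [show k + m + 1 + 1 - (k + 1) = m + 1 by omega, gaussBinom_succ_succ,
        qPochhammer_succ q (k + m + 1), qPochhammer_succ q k, qPochhammer_succ q m]
      linear_combination (q ^ (k + 1) * (1 - q ^ (m + 1))) * h₁ + (1 - q ^ (k + 1)) * h₂
    · simp

end CommRing

theorem gaussBinom_eq_div [Field R] {q : R} {n k : ℕ} (h : k ≤ n) (hk : qPochhammer q k ≠ 0)
    (hnk : qPochhammer q (n - k) ≠ 0) :
    gaussBinom q n k = qPochhammer q n / (qPochhammer q k * qPochhammer q (n - k)) := by
  rw [eq_div_iff (mul_ne_zero hk hnk), ← mul_assoc, gaussBinom_mul_qPochhammer_mul_qPochhammer q h]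

end GaussianBinomial

section Exponents

theorem two_mul_choose_two (n : ℕ) : 2 * (n.choose 2 : ℤ) = n ^ 2 - n := by
  have h : (2 * (n.choose 2 : ℤ) : ℚ) = ((n ^ 2 - n : ℤ) : ℚ) := by
    push_cast; rw [Nat.cast_choose_two]; ring
  exact_mod_cast h

theorem two_mul_ediv_two_sq_add_self (m : ℤ) : 2 * ((m ^ 2 + m) / 2) = m ^ 2 + m :=
  Int.two_mul_ediv_two_of_even (by rw [sq, ← mul_add_one]; exact m.even_mul_succ_self)

theorem ediv_two_sq_add_self_natCast_sub (k N : ℕ) :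
    (((k : ℤ) - N) ^ 2 + ((k : ℤ) - N)) / 2 = (k.choose 2 : ℤ) + N.choose 2 + k - N * k := by
  refine mul_left_cancel₀ two_ne_zero ?_
  rw [two_mul_ediv_two_sq_add_self]
  linear_combination -(two_mul_choose_two k) - two_mul_choose_two N

end Exponents

theorem prod_range_mul_eq_sum_gaussBinom {K : Type*} [Field K] {z q : K} (hz : z ≠ 0)
    (hq : q ≠ 0) (N : ℕ) :
    ∏ j ∈ range N, ((1 + z * q ^ (j + 1)) * (1 + z⁻¹ * q ^ j)) =
      ∑ k ∈ range (2 * N + 1), gaussBinom q (2 * N) k *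
        (z ^ ((k : ℤ) - N) * q ^ ((((k : ℤ) - N) ^ 2 + ((k : ℤ) - N)) / 2)) := by
  set t := z * q / q ^ N
  -- Of the factors `1 + t q^j`, `j < 2N`, the upper half is `1 + z q^{i+1}`, and the lower half,
  -- read backwards, is `z q^{-i} (1 + z⁻¹ q^i)`.
  have hlow : ∀ i ∈ range N, 1 + t * q ^ (N - 1 - i) = z / q ^ i * (1 + z⁻¹ * q ^ i) := by
    intro i hi
    have : q ^ N = q * q ^ (N - 1 - i) * q ^ i := by
      rw [← pow_succ', ← pow_add]; congr 1; have := mem_range.1 hi; omega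
    simp only [t, this]
    field_simp
    ring
  have hhigh : ∀ i ∈ range N, 1 + t * q ^ (N + i) = 1 + z * q ^ (i + 1) := by
    intro i _
    simp only [t, pow_add, pow_succ]
    field_simp
  have hsplit : ∏ j ∈ range (2 * N), (1 + t * q ^ j) =
      z ^ N / q ^ N.choose 2 * ∏ j ∈ range N, ((1 + z * q ^ (j + 1)) * (1 + z⁻¹ * q ^ j)) := by
    rw [two_mul, prod_range_add, ← prod_range_reflect, prod_congr rfl hlow, prod_congr rfl hhigh,
      prod_mul_distrib, prod_div_distrib, prod_const, card_range, prod_pow_eq_pow_sum,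
      sum_range_id, ← Nat.choose_two_right, prod_mul_distrib]
    ring
  have hterm : ∀ k ∈ range (2 * N + 1),
      q ^ N.choose 2 / z ^ N * (gaussBinom q (2 * N) k * q ^ k.choose 2 * t ^ k) =
        gaussBinom q (2 * N) k *
          (z ^ ((k : ℤ) - N) * q ^ ((((k : ℤ) - N) ^ 2 + ((k : ℤ) - N)) / 2)) := by
    intro k _
    rw [ediv_two_sq_add_self_natCast_sub, zpow_sub₀ hz, zpow_sub₀ hq, zpow_add₀ hq, zpow_add₀ hq]
    simp only [zpow_natCast, ← Nat.cast_mul, t, div_pow, mul_pow, ← pow_mul]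
    field_simp
  rw [← sum_congr rfl hterm, ← mul_sum, ← prod_one_add_mul_pow_eq_sum_gaussBinom, hsplit]
  field_simp

theorem sum_range_two_mul_add_one_eq_sum_Icc {M : Type*} [AddCommMonoid M] (f : ℕ → M) (N : ℕ) :
    ∑ k ∈ range (2 * N + 1), f k = ∑ m ∈ Icc (-(N : ℤ)) N, f (m + N).toNat := by
  refine sum_nbij' (fun k => (k : ℤ) - N) (fun m => (m + N).toNat) ?_ ?_ ?_ ?_ ?_ <;>
    intro a ha <;> simp only [mem_range, mem_Icc] at ha ⊢ <;> first | omega | simp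

theorem summable_pow_mul_pow_choose_two (a : ℝ) {r : ℝ} (hr₀ : 0 ≤ r) (hr : r < 1) :
    Summable fun n : ℕ => a ^ n * r ^ n.choose 2 := by
  refine summable_of_ratio_norm_eventually_le (r := 1 / 2) (by norm_num) ?_
  have hlim : Tendsto (fun n : ℕ => |a| * r ^ n) atTop (𝓝 0) := by
    simpa using (tendsto_pow_atTop_nhds_zero_of_lt_one hr₀ hr).const_mul |a|
  filter_upwards [hlim.eventually (ge_mem_nhds (by norm_num : (0 : ℝ) < 1 / 2))] with n hn
  have : a ^ (n + 1) * r ^ (n + 1).choose 2 = (a * r ^ n) * (a ^ n * r ^ n.choose 2) := by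
    rw [Nat.choose_succ_succ, Nat.choose_one_right, pow_add, pow_succ]; ring
  rw [this, norm_mul, Real.norm_eq_abs (a * r ^ n), abs_mul,
    abs_of_nonneg (by positivity : 0 ≤ r ^ n)]
  exact mul_le_mul_of_nonneg_right hn (norm_nonneg _)

section NormedField

variable {K : Type*} [NormedField K] {q : K}

theorem summable_norm_zpow_mul_zpow (z : K) (hq : ‖q‖ < 1) :
    Summable fun m : ℤ => ‖z ^ m * q ^ ((m ^ 2 + m) / 2)‖ := by
  refine .of_nat_of_neg ?_ ?_
  · refine (summable_pow_mul_pow_choose_two (‖z‖ * ‖q‖) (norm_nonneg q) hq).congr fun n => ?_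
    have h := ediv_two_sq_add_self_natCast_sub n 0
    simp only [Nat.cast_zero, sub_zero, Nat.choose_zero_succ, zero_mul, add_zero] at h
    rw [h, ← Nat.cast_add, zpow_natCast, norm_mul, norm_pow, zpow_natCast, norm_pow, pow_add]
    ring
  · refine (summable_pow_mul_pow_choose_two ‖z⁻¹‖ (norm_nonneg q) hq).congr fun n => ?_
    have h := ediv_two_sq_add_self_natCast_sub 0 n
    simp only [Nat.cast_zero, zero_sub, Nat.choose_zero_succ, mul_zero, add_zero, zero_add,
      sub_zero] at h
    rw [h, zpow_natCast, zpow_neg, ← inv_zpow, zpow_natCast, norm_mul, norm_pow, norm_pow]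

theorem one_sub_pow_succ_ne_zero (hq : ‖q‖ < 1) (n : ℕ) : 1 - q ^ (n + 1) ≠ 0 := by
  intro h
  have : ‖q ^ (n + 1)‖ < 1 := by
    rw [norm_pow]; exact pow_lt_one₀ (norm_nonneg q) hq n.succ_ne_zero
  rw [← sub_eq_zero.1 h, norm_one] at this
  exact lt_irrefl _ this

theorem qPochhammer_ne_zero (hq : ‖q‖ < 1) (n : ℕ) : qPochhammer q n ≠ 0 :=
  prod_ne_zero_iff.2 fun j _ => one_sub_pow_succ_ne_zero hq j

theorem jacobi_triple_product_zero (z : K) :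
    ∏' n : ℕ, ((1 + z * 0 ^ (n + 1)) * (1 + z⁻¹ * 0 ^ n) * (1 - 0 ^ (n + 1))) =
      ∑' n : ℤ, z ^ n * (0 : K) ^ ((n ^ 2 + n) / 2) := by
  rw [tprod_eq_prod (s := {0}) fun n hn => by simp_all, tsum_eq_sum (s := {0, -1}) fun n hn => ?_]
  · simp
  have hn : n * (n + 1) ≠ 0 := by
    simp only [mem_insert, mem_singleton, not_or] at hn
    exact mul_ne_zero hn.1 fun h => hn.2 (by linarith)
  rw [zero_zpow _ fun h => hn (by linear_combination -(two_mul_ediv_two_sq_add_self n) + 2 * h),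
    mul_zero]

variable [CompleteSpace K]

theorem multipliable_one_add_mul_pow (hq : ‖q‖ < 1) (c : K) (k : ℕ) :
    Multipliable fun n => 1 + c * q ^ (n + k) := by
  refine multipliable_one_add_of_summable ?_
  simpa [norm_mul, norm_pow, pow_add, mul_assoc] using
    ((summable_geometric_of_lt_one (norm_nonneg q) hq).mul_right (‖q‖ ^ k)).mul_left ‖c‖

theorem multipliable_one_sub_pow_succ (hq : ‖q‖ < 1) : Multipliable fun n => 1 - q ^ (n + 1) := by
  simpa [← sub_eq_add_neg] using multipliable_one_add_mul_pow hq (-1) 1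

theorem tendsto_qPochhammer (hq : ‖q‖ < 1) :
    Tendsto (qPochhammer q) atTop (𝓝 (∏' n, (1 - q ^ (n + 1)))) :=
  (multipliable_one_sub_pow_succ hq).hasProd.tendsto_prod_nat

theorem tprod_one_sub_pow_succ_ne_zero (hq : ‖q‖ < 1) : ∏' n, (1 - q ^ (n + 1)) ≠ 0 := by
  simp_rw [sub_eq_add_neg]
  refine tprod_one_add_ne_zero_of_summable (fun n => ?_) ?_
  · rw [← sub_eq_add_neg]; exact one_sub_pow_succ_ne_zero hq n
  · simpa [pow_succ] using (summable_geometric_of_lt_one (norm_nonneg q) hq).mul_right ‖q‖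

theorem exists_norm_gaussBinom_le (hq : ‖q‖ < 1) : ∃ C, ∀ n k, ‖gaussBinom q n k‖ ≤ C := by
  obtain ⟨A, hA⟩ := isBounded_iff_forall_norm_le.1
    (Metric.isBounded_range_of_tendsto _ (tendsto_qPochhammer hq))
  obtain ⟨B, hB⟩ := isBounded_iff_forall_norm_le.1 (Metric.isBounded_range_of_tendsto _
    ((tendsto_qPochhammer hq).inv₀ (tprod_one_sub_pow_succ_ne_zero hq)))
  have hA' (n : ℕ) : ‖qPochhammer q n‖ ≤ A := hA _ ⟨n, rfl⟩
  have hB' (n : ℕ) : ‖(qPochhammer q n)⁻¹‖ ≤ B := hB _ ⟨n, rfl⟩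
  have hA₀ : 0 ≤ A := (norm_nonneg _).trans (hA' 0)
  have hB₀ : 0 ≤ B := (norm_nonneg _).trans (hB' 0)
  refine ⟨A * (B * B), fun n k => ?_⟩
  rcases le_or_gt k n with hkn | hnk
  · rw [gaussBinom_eq_div hkn (qPochhammer_ne_zero hq k) (qPochhammer_ne_zero hq (n - k)),
      div_eq_mul_inv, mul_inv, norm_mul, norm_mul]
    exact mul_le_mul (hA' n) (mul_le_mul (hB' k) (hB' (n - k)) (norm_nonneg _) hB₀)
      (by positivity) hA₀
  · rw [gaussBinom_eq_zero_of_lt q hnk, norm_zero]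
    positivity

theorem tendsto_gaussBinom_two_mul (hq : ‖q‖ < 1) (m : ℤ) :
    Tendsto (fun N : ℕ => gaussBinom q (2 * N) (m + N).toNat) atTop
      (𝓝 (∏' n, (1 - q ^ (n + 1)))⁻¹) := by
  have hP := tendsto_qPochhammer hq
  have hP₀ := tprod_one_sub_pow_succ_ne_zero hq
  have hn : Tendsto (fun N : ℕ => 2 * N) atTop atTop :=
    tendsto_atTop_mono (fun N => show N ≤ 2 * N by omega) tendsto_id
  have hk : Tendsto (fun N : ℕ => (m + N).toNat) atTop atTop :=
    tendsto_atTop_mono (fun N => by omega) (tendsto_sub_atTop_nat m.natAbs)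
  have hnk : Tendsto (fun N : ℕ => 2 * N - (m + N).toNat) atTop atTop :=
    tendsto_atTop_mono (fun N => by omega) (tendsto_sub_atTop_nat m.natAbs)
  have hlim := (hP.comp hn).div ((hP.comp hk).mul (hP.comp hnk)) (mul_ne_zero hP₀ hP₀)
  rw [div_mul_cancel_left₀ hP₀] at hlim
  refine hlim.congr' ?_
  filter_upwards [eventually_ge_atTop m.natAbs] with N hN
  exact (gaussBinom_eq_div (by dsimp only; omega) (qPochhammer_ne_zero hq _)
    (qPochhammer_ne_zero hq _)).symm

theorem tendsto_sum_gaussBinom_mul (hq : ‖q‖ < 1) {w : ℤ → K} (hw : Summable fun m => ‖w m‖) :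
    Tendsto (fun N : ℕ => ∑ k ∈ range (2 * N + 1), gaussBinom q (2 * N) k * w (k - N)) atTop
      (𝓝 ((∏' n, (1 - q ^ (n + 1)))⁻¹ * ∑' m, w m)) := by
  obtain ⟨C, hC⟩ := exists_norm_gaussBinom_le hq
  let F (N : ℕ) : ℤ → K :=
    (Icc (-(N : ℤ)) N : Set ℤ).indicator fun m => gaussBinom q (2 * N) (m + N).toNat * w m
  have hF (N : ℕ) :
      ∑ k ∈ range (2 * N + 1), gaussBinom q (2 * N) k * w (k - N) = ∑' m, F N m := by
    rw [sum_range_two_mul_add_one_eq_sum_Icc, sum_eq_tsum_indicator]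
    refine tsum_congr fun m => congrFun (Set.indicator_congr fun m hm => ?_) m
    rw [coe_Icc, Set.mem_Icc] at hm
    rw [Int.toNat_of_nonneg (by omega), add_sub_cancel_right]
  simp_rw [hF, ← tsum_mul_left]
  refine tendsto_tsum_of_dominated_convergence (hw.mul_left C) (fun m => ?_)
    (Eventually.of_forall fun N m => ?_)
  · refine ((tendsto_gaussBinom_two_mul hq m).mul_const (w m)).congr' ?_
    filter_upwards [eventually_ge_atTop m.natAbs] with N hN
    have hm : m ∈ (Icc (-(N : ℤ)) N : Set ℤ) := by rw [coe_Icc, Set.mem_Icc]; omega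
    exact (Set.indicator_of_mem hm (fun m => gaussBinom q (2 * N) (m + N).toNat * w m)).symm
  · refine (norm_indicator_le_norm_self _ _).trans ?_
    rw [norm_mul]
    exact mul_le_mul_of_nonneg_right (hC _ _) (norm_nonneg _)

theorem jacobi_triple_product_of_ne_zero {z : K} (hz : z ≠ 0) (hq₀ : q ≠ 0) (hq : ‖q‖ < 1) :
    ∏' n : ℕ, ((1 + z * q ^ (n + 1)) * (1 + z⁻¹ * q ^ n) * (1 - q ^ (n + 1))) =
      ∑' n : ℤ, z ^ n * q ^ ((n ^ 2 + n) / 2) := by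
  have hA := multipliable_one_add_mul_pow hq z 1
  have hB : Multipliable fun n => 1 + z⁻¹ * q ^ n := by
    simpa using multipliable_one_add_mul_pow hq z⁻¹ 0
  have hprod := (hA.hasProd.tendsto_prod_nat.mul hB.hasProd.tendsto_prod_nat).congr
    fun N => (prod_mul_distrib (s := range N)).symm
  have hsum := tendsto_sum_gaussBinom_mul hq (summable_norm_zpow_mul_zpow z hq)
  simp_rw [← prod_range_mul_eq_sum_gaussBinom hz hq₀] at hsum
  rw [(hA.mul hB).tprod_mul (multipliable_one_sub_pow_succ hq), hA.tprod_mul hB,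
    tendsto_nhds_unique hprod hsum, mul_comm, ← mul_assoc,
    mul_inv_cancel₀ (tprod_one_sub_pow_succ_ne_zero hq), one_mul]

end NormedField

/-- Jacobi triple product identity:
`∏_{n≥0} (1+zq^{n+1})(1+z⁻¹qⁿ)(1-q^{n+1}) = ∑_{n∈ℤ} zⁿ q^{(n²+n)/2}`. -/
theorem jacobi_triple_product (z q : ℂ) (hz : z ≠ 0) (hq : ‖q‖ < 1) :
    ∏' n : ℕ, ((1 + z * q ^ (n + 1)) * (1 + z⁻¹ * q ^ n) * (1 - q ^ (n + 1))) =
      ∑' n : ℤ, z ^ n * q ^ ((n ^ 2 + n) / 2) := by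
  rcases eq_or_ne q 0 with rfl | hq₀
  · exact jacobi_triple_product_zero z
  · exact jacobi_triple_product_of_ne_zero hz hq₀ hq
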